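/- arXiv:1805.04583 — 2 statements merged into one kernel-verified Lean document; each statement's English description precedes it below -/
import Mathlib

section
/- Let K be a positive integer and let (Ψ_n)_{n=1}^∞ be a sequence of linear maps Ψ_n : M_d(ℂ) → M_m(ℂ) converging (in norm on the finite-dimensional space of linear maps, equivalently pointwise) to a linear map Ψ. Suppose that for each n there exist vectors x_{1,n}, ..., x_{K,n} ∈ ℂ^m and y_{1,n}, ..., y_{K,n} ∈ ℂ^d such that Ψ_n(X) = Σ_{k=1}^K (x_{k,n} y_{k,n}*) X (x_{k,n} y_{k,n}*)* for all X ∈ M_d(ℂ). Then there exist vectors x_1, ..., x_K ∈ ℂ^m and y_1, ..., y_K ∈ ℂ^d such that Ψ(X) = Σ_{k=1}^K (x_k y_k*) X (x_k y_k*)* for all X ∈ M_d(ℂ). -/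
open Matrix

/-- The rank-one `m × d` matrix `x y*` with entries `(x y*)_{k,l} = x_k * conj (y_l)`. -/
noncomputable def outerRect {m d : ℕ} (x : Fin m → ℂ) (y : Fin d → ℂ) :
    Matrix (Fin m) (Fin d) ℂ :=
  fun k l => x k * (starRingEnd ℂ) (y l)

section aux
variable {d m K : ℕ}

noncomputable def krausMap (K : ℕ) {d m : ℕ} (X : Matrix (Fin d) (Fin d) ℂ)
    (p : (Fin K → EuclideanSpace ℂ (Fin m)) × (Fin K → EuclideanSpace ℂ (Fin d))) :
    Matrix (Fin m) (Fin m) ℂ :=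
  ∑ k, outerRect (p.1 k) (p.2 k) * X * (outerRect (p.1 k) (p.2 k))ᴴ

lemma continuous_outer_k (k : Fin K) :
    Continuous (fun p : (Fin K → EuclideanSpace ℂ (Fin m)) × (Fin K → EuclideanSpace ℂ (Fin d)) =>
      outerRect (p.1 k) (p.2 k)) := by
  apply continuous_matrix
  intro i j
  have h1 : Continuous fun p : (Fin K → EuclideanSpace ℂ (Fin m)) × (Fin K → EuclideanSpace ℂ (Fin d)) => (p.1 k) i :=
    (EuclideanSpace.proj i).continuous.comp ((continuous_apply k).comp continuous_fst)
  have h2 : Continuous fun p : (Fin K → EuclideanSpace ℂ (Fin m)) × (Fin K → EuclideanSpace ℂ (Fin d)) => (p.2 k) j :=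
    (EuclideanSpace.proj j).continuous.comp ((continuous_apply k).comp continuous_snd)
  exact h1.mul (Complex.continuous_conj.comp h2)

lemma continuous_krausMap (X : Matrix (Fin d) (Fin d) ℂ) :
    Continuous (krausMap K (m := m) X) := by
  apply continuous_finset_sum
  intro k _
  exact ((continuous_outer_k k).matrix_mul continuous_const).matrix_mul
    (continuous_outer_k k).matrix_conjTranspose

lemma norm_sq_eq_sum {n : ℕ} (z : EuclideanSpace ℂ (Fin n)) :
    ((‖z‖ ^ 2 : ℝ) : ℂ) = ∑ i, z i * (starRingEnd ℂ) (z i) := by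
  rw [PiLp.norm_sq_eq_of_L2]
  push_cast
  exact Finset.sum_congr rfl fun i _ => (RCLike.mul_conj _).symm

lemma trace_outer (x : EuclideanSpace ℂ (Fin m)) (y : EuclideanSpace ℂ (Fin d)) :
    trace (outerRect x y * (1 : Matrix (Fin d) (Fin d) ℂ) * (outerRect x y)ᴴ)
      = ((‖x‖ ^ 2 * ‖y‖ ^ 2 : ℝ) : ℂ) := by
  rw [Complex.ofReal_mul, norm_sq_eq_sum, norm_sq_eq_sum, Matrix.mul_one, Finset.sum_mul_sum]
  simp only [trace, diag_apply, mul_apply, conjTranspose_apply, outerRect, star_mul',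
    RCLike.star_def, Complex.conj_conj]
  apply Finset.sum_congr rfl
  intro i _
  apply Finset.sum_congr rfl
  intro j _
  ring

lemma normalize_pair (x : EuclideanSpace ℂ (Fin m)) (y : EuclideanSpace ℂ (Fin d)) :
    ∃ (x' : EuclideanSpace ℂ (Fin m)) (y' : EuclideanSpace ℂ (Fin d)),
      outerRect x' y' = outerRect x y ∧ ‖x'‖ = ‖y'‖ := by
  by_cases hx : x = 0
  · exact ⟨0, 0, by ext i j; simp [outerRect, hx], by simp⟩
  by_cases hy : y = 0
  · exact ⟨0, 0, by ext i j; simp [outerRect, hy], by simp⟩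
  have ha : (0:ℝ) < ‖x‖ := norm_pos_iff.mpr hx
  have hb : (0:ℝ) < ‖y‖ := norm_pos_iff.mpr hy
  set c : ℝ := Real.sqrt (‖y‖ / ‖x‖) with hcdef
  have hc : 0 < c := Real.sqrt_pos.mpr (div_pos hb ha)
  have hcc : c * c = ‖y‖ / ‖x‖ := Real.mul_self_sqrt (le_of_lt (div_pos hb ha))
  refine ⟨(c : ℂ) • x, ((c⁻¹ : ℝ) : ℂ) • y, ?_, ?_⟩
  · ext i j
    simp only [outerRect, PiLp.smul_apply, smul_eq_mul, _root_.map_mul, Complex.conj_ofReal]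
    rw [show ((c:ℂ)) * x i * (((c⁻¹:ℝ):ℂ) * (starRingEnd ℂ) (y j))
        = ((c:ℂ) * ((c⁻¹:ℝ):ℂ)) * (x i * (starRingEnd ℂ) (y j)) by ring]
    norm_cast
    rw [mul_inv_cancel₀ (ne_of_gt hc)]
    simp
  · rw [norm_smul, norm_smul, Complex.norm_real, Complex.norm_real,
      Real.norm_eq_abs, Real.norm_eq_abs, abs_of_pos hc, abs_of_pos (inv_pos.mpr hc)]
    rw [inv_mul_eq_div, eq_div_iff (ne_of_gt hc)]
    field_simp at hcc ⊢
    nlinarith [hcc]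

end aux

/-- If a sequence of linear maps `Ψ_n : M_d(ℂ) → M_m(ℂ)` converges (pointwise, equivalently
in norm) to `Ψ`, and each `Ψ_n` admits a Choi-Kraus representation with `K` rank-one
operators, then so does `Ψ`. -/
theorem rank_one_kraus_limit {d m : ℕ} (hd : 1 ≤ d) (hm : 1 ≤ m) (K : ℕ) (hK : 0 < K)
    (Ψseq : ℕ → (Matrix (Fin d) (Fin d) ℂ →ₗ[ℂ] Matrix (Fin m) (Fin m) ℂ))
    (Ψ : Matrix (Fin d) (Fin d) ℂ →ₗ[ℂ] Matrix (Fin m) (Fin m) ℂ)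
    (hconv : ∀ X : Matrix (Fin d) (Fin d) ℂ,
      Filter.Tendsto (fun n => Ψseq n X) Filter.atTop (nhds (Ψ X)))
    (hkraus : ∀ n : ℕ, ∃ (x : Fin K → EuclideanSpace ℂ (Fin m))
        (y : Fin K → EuclideanSpace ℂ (Fin d)),
      ∀ X, Ψseq n X = ∑ k, outerRect (x k) (y k) * X * (outerRect (x k) (y k))ᴴ) :
    ∃ (x : Fin K → EuclideanSpace ℂ (Fin m)) (y : Fin K → EuclideanSpace ℂ (Fin d)),
      ∀ X, Ψ X = ∑ k, outerRect (x k) (y k) * X * (outerRect (x k) (y k))ᴴ := by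
  classical
  choose x0 y0 hx0 using hkraus
  choose xs ys hout hnrm using fun n k => normalize_pair (x0 n k) (y0 n k)
  have hrep : ∀ n X, Ψseq n X = krausMap K X (xs n, ys n) := by
    intro n X
    rw [hx0 n X]
    simp only [krausMap, hout]
  -- trace identity
  have htr : ∀ n, ∑ k, (‖xs n k‖ ^ 2 * ‖ys n k‖ ^ 2 : ℝ) = (trace (Ψseq n 1)).re := by
    intro n
    rw [hrep n 1]
    simp only [krausMap, trace_sum, trace_outer, ← Complex.ofReal_sum, Complex.ofReal_re]
  -- trace continuity and boundedness
  have htc : Continuous fun A : Matrix (Fin m) (Fin m) ℂ => trace A := by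
    refine continuous_finset_sum _ fun i _ => ?_
    exact continuous_id.matrix_elem i i
  have hconv_tr : Filter.Tendsto (fun n => (trace (Ψseq n 1)).re) Filter.atTop
      (nhds ((trace (Ψ 1)).re)) :=
    (Complex.continuous_re.tendsto _).comp ((htc.tendsto _).comp (hconv 1))
  obtain ⟨C, hC⟩ := hconv_tr.bddAbove_range
  have hC' : ∀ n, (trace (Ψseq n 1)).re ≤ C := fun n => hC ⟨n, rfl⟩
  set R : ℝ := max 1 C with hRdef
  have hR1 : (1:ℝ) ≤ R := le_max_left _ _
  have hR0 : (0:ℝ) ≤ R := le_trans zero_le_one hR1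
  have hbound : ∀ n k, ‖xs n k‖ ≤ R ∧ ‖ys n k‖ ≤ R := by
    intro n k
    have hsum : ∑ j, (‖xs n j‖ ^ 2 * ‖ys n j‖ ^ 2 : ℝ) ≤ C := by
      rw [htr n]; exact hC' n
    have hterm : ‖xs n k‖ ^ 2 * ‖ys n k‖ ^ 2 ≤ C := by
      refine le_trans ?_ hsum
      exact Finset.single_le_sum (f := fun j => ‖xs n j‖ ^ 2 * ‖ys n j‖ ^ 2) (fun j _ => by positivity) (Finset.mem_univ k)
    have h4 : ‖xs n k‖ ^ 4 ≤ R := by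
      have := hnrm n k
      calc ‖xs n k‖ ^ 4 = ‖xs n k‖ ^ 2 * ‖ys n k‖ ^ 2 := by rw [← this]; ring
        _ ≤ C := hterm
        _ ≤ R := le_max_right _ _
    have hx4 : ‖xs n k‖ ≤ R := by
      have hR4 : R ≤ R ^ 4 := le_self_pow₀ hR1 (by norm_num)
      exact le_of_pow_le_pow_left₀ (by norm_num) hR0 (le_trans h4 hR4)
    exact ⟨hx4, (hnrm n k) ▸ hx4⟩
  -- Bolzano-Weierstrass
  set v : ℕ → (Fin K → EuclideanSpace ℂ (Fin m)) × (Fin K → EuclideanSpace ℂ (Fin d)) :=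
    fun n => (xs n, ys n) with hvdef
  have hmem : ∀ n, v n ∈ Metric.closedBall (0 : (Fin K → EuclideanSpace ℂ (Fin m)) × (Fin K → EuclideanSpace ℂ (Fin d))) R := by
    intro n
    rw [mem_closedBall_zero_iff, Prod.norm_def]
    apply max_le
    · rw [pi_norm_le_iff_of_nonneg hR0]; exact fun k => (hbound n k).1
    · rw [pi_norm_le_iff_of_nonneg hR0]; exact fun k => (hbound n k).2
  obtain ⟨p, _, φ, hφ, hlim⟩ := tendsto_subseq_of_bounded Metric.isBounded_closedBall hmem
  refine ⟨p.1, p.2, fun X => ?_⟩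
  have h1 : Filter.Tendsto (fun n => Ψseq (φ n) X) Filter.atTop (nhds (Ψ X)) :=
    (hconv X).comp hφ.tendsto_atTop
  have h2 : Filter.Tendsto (fun n => krausMap K X (v (φ n))) Filter.atTop
      (nhds (krausMap K X p)) := ((continuous_krausMap X).tendsto p).comp hlim
  have h3 : (fun n => Ψseq (φ n) X) = fun n => krausMap K X (v (φ n)) := by
    funext n; exact hrep (φ n) X
  rw [h3] at h1
  exact tendsto_nhds_unique h1 h2
end

section
/- Let d ≥ 2 and for 1 ≤ i ≤ d+1 let V_i = {v_{i,j} : 1 ≤ j ≤ d} be a collection of d+1 pairwise mutually unbiased orthonormal bases of ℂ^d, and set P_{i,j} = v_{i,j} v_{i,j}*. Then for every X ∈ M_d(ℂ), (1/(d+1)) · Σ_{i=1}^{d+1} Σ_{j=1}^{d} P_{i,j} X P_{i,j} = (1/(d+1))·(X + tr(X)·I_d). Consequently, the map Z(X) = (1/(d+1))·(X + tr(X)·I_d) admits a Kraus decomposition consisting of d(d+1) rank-one operators. -/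
/-!
Under `vec`, the maps `X ↦ ∑ₚ Pₚ X Pₚ` and `X ↦ X + tr(X)·1` become the matrices `∑ₚ Pₚᵀ ⊗ Pₚ`
and `1 + vec 1 (vec 1)ᵀ`. For Hermitian `Pₚ` both are Hermitian, so they coincide as soon as the
trace of the square of their difference vanishes. For projections `Pₚ = wₚ wₚ*` onto `d(d+1)` unit
vectors this trace only involves `tr(Pₚ Pₚ') = |⟨wₚ, wₚ'⟩|²`, and it vanishes exactly when the
frame potential `∑ |⟨wₚ, wₚ'⟩|⁴` equals `2d(d+1)`, which is its value on a complete set of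
mutually unbiased bases. Scaling the projections by `(d+1)^(-1/2)` gives the Kraus operators.
-/

open Matrix

/-- The rank-one matrix `x y*` with entries `(x y*)_{k,l} = x_k * conj (y_l)`. -/
noncomputable def outer {d : ℕ} (x y : Fin d → ℂ) : Matrix (Fin d) (Fin d) ℂ :=
  fun k l => x k * (starRingEnd ℂ) (y l)

open scoped Kronecker InnerProductSpace ComplexOrder
open Finset

theorem Matrix.rank_vecMulVec_eq_one {K m n : Type*} [Field K] [Fintype n] {u : m → K}
    {v : n → K} (hu : u ≠ 0) (hv : v ≠ 0) : (vecMulVec u v).rank = 1 := by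
  classical
  refine le_antisymm (rank_vecMulVec_le u v) (Nat.one_le_iff_ne_zero.mpr fun h => ?_)
  obtain ⟨i, hi⟩ := Function.ne_iff.mp hu
  obtain ⟨j, hj⟩ := Function.ne_iff.mp hv
  rw [rank, Submodule.finrank_eq_zero, LinearMap.range_eq_bot] at h
  have := congr_fun (LinearMap.congr_fun h (Pi.single j 1)) i
  simp [vecMulVec_apply] at this
  tauto

section Superoperator

variable {ι n R : Type*} [Fintype ι] [CommRing R]

noncomputable def sandwichRep [Fintype n] (P : ι → Matrix n n R) : Matrix (n × n) (n × n) R :=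
  ∑ p, (P p)ᵀ ⊗ₖ P p

variable (n R) in
def traceRep [DecidableEq n] : Matrix (n × n) (n × n) R := 1 + vecMulVec (vec 1) (vec 1)

variable [Fintype n]

theorem sandwichRep_mulVec_vec (P : ι → Matrix n n R) (X : Matrix n n R) :
    sandwichRep P *ᵥ vec X = vec (∑ p, P p * X * P p) := by
  simp only [sandwichRep, sum_mulVec, kronecker_mulVec_vec, transpose_transpose, vec_sum]

theorem trace_sandwichRep_mul_self (P : ι → Matrix n n R) :
    trace (sandwichRep P * sandwichRep P) = ∑ p, ∑ q, trace (P p * P q) ^ 2 := by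
  simp only [sandwichRep, Finset.sum_mul, Finset.mul_sum, ← mul_kronecker_mul, trace_sum,
    trace_kronecker, ← transpose_mul, trace_transpose]
  exact sum_congr rfl fun p _ => sum_congr rfl fun q _ => by rw [trace_mul_comm (P q), sq]

variable [DecidableEq n]

theorem traceRep_mulVec_vec (X : Matrix n n R) :
    traceRep n R *ᵥ vec X = vec (X + trace X • 1) := by
  rw [traceRep, add_mulVec, one_mulVec, vecMulVec_mulVec, op_smul_eq_smul, vec_dotProduct_vec,
    transpose_one, Matrix.one_mul, vec_add, vec_smul]

theorem sum_mul_mul_eq_of_sandwichRep_eq {P : ι → Matrix n n R}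
    (h : sandwichRep P = traceRep n R) (X : Matrix n n R) :
    ∑ p, P p * X * P p = X + trace X • 1 :=
  vec_inj.mp <| by rw [← sandwichRep_mulVec_vec, h, traceRep_mulVec_vec]

theorem trace_sandwichRep_mul_traceRep (P : ι → Matrix n n R) :
    trace (sandwichRep P * traceRep n R) = ∑ p, (trace (P p) ^ 2 + trace (P p * P p)) := by
  rw [traceRep, Matrix.mul_add, Matrix.mul_one, trace_add, mul_vecMulVec, trace_vecMulVec,
    sandwichRep_mulVec_vec, dotProduct_comm, vec_dotProduct_vec, transpose_one, Matrix.one_mul,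
    Finset.sum_add_distrib]
  simp only [sandwichRep, trace_sum, trace_kronecker, trace_transpose, Matrix.mul_one, sq]

theorem trace_traceRep_mul_self :
    trace (traceRep n R * traceRep n R) = 2 * (Fintype.card n ^ 2 + Fintype.card n) := by
  have h1 : vec (1 : Matrix n n R) ⬝ᵥ vec 1 = Fintype.card n := by
    rw [vec_dotProduct_vec, transpose_one, Matrix.one_mul, trace_one]
  simp only [traceRep, Matrix.mul_add, Matrix.add_mul, Matrix.mul_one, Matrix.one_mul,
    vecMulVec_mul_vecMulVec, h1, trace_add, trace_one, trace_vecMulVec, dotProduct_smul,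
    smul_eq_mul, Fintype.card_prod]
  push_cast
  ring

end Superoperator

section Hermitian

variable {ι n 𝕜 : Type*} [Fintype ι] [RCLike 𝕜]

theorem isHermitian_sandwichRep [Fintype n] {P : ι → Matrix n n 𝕜}
    (hP : ∀ p, (P p).IsHermitian) : (sandwichRep P).IsHermitian := by
  rw [IsHermitian, sandwichRep, conjTranspose_sum]
  exact sum_congr rfl fun p _ => by
    rw [conjTranspose_kronecker, (hP p).transpose.eq, (hP p).eq]

theorem isHermitian_traceRep [DecidableEq n] : (traceRep n 𝕜).IsHermitian := by
  rw [traceRep, IsHermitian, conjTranspose_add, conjTranspose_one, conjTranspose_vecMulVec,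
    star_vec, Matrix.map_one _ (star_zero _) (star_one _)]

theorem isHermitian_vecMulVec_star (x : n → 𝕜) : (vecMulVec x (star x)).IsHermitian := by
  rw [IsHermitian, conjTranspose_vecMulVec, star_star]

variable [Fintype n] [DecidableEq n]

theorem sandwichRep_eq_traceRep_of_sum_trace_sq {P : ι → Matrix n n 𝕜}
    (hP : ∀ p, (P p).IsHermitian)
    (h : ∑ p, ∑ q, trace (P p * P q) ^ 2 + 2 * (Fintype.card n ^ 2 + Fintype.card n) =
      2 * ∑ p, (trace (P p) ^ 2 + trace (P p * P p))) :
    sandwichRep P = traceRep n 𝕜 := by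
  have hD : (sandwichRep P - traceRep n 𝕜)ᴴ = sandwichRep P - traceRep n 𝕜 := by
    rw [conjTranspose_sub, (isHermitian_sandwichRep hP).eq, isHermitian_traceRep.eq]
  rw [← sub_eq_zero, ← trace_conjTranspose_mul_self_eq_zero_iff, hD, sub_mul, mul_sub, mul_sub,
    trace_sub, trace_sub, trace_sub, trace_mul_comm (traceRep n 𝕜), trace_sandwichRep_mul_self,
    trace_sandwichRep_mul_traceRep, trace_traceRep_mul_self]
  linear_combination h

end Hermitian

section Projection

variable {ι n 𝕜 : Type*} [Fintype ι] [Fintype n] [RCLike 𝕜]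

theorem trace_vecMulVec_star (x : EuclideanSpace 𝕜 n) :
    trace (vecMulVec x.ofLp (star x.ofLp)) = ‖x‖ ^ 2 := by
  rw [trace_vecMulVec, ← EuclideanSpace.inner_eq_star_dotProduct, inner_self_eq_norm_sq_to_K]

theorem trace_vecMulVec_star_mul_vecMulVec_star (x y : EuclideanSpace 𝕜 n) :
    trace (vecMulVec x.ofLp (star x.ofLp) * vecMulVec y.ofLp (star y.ofLp)) =
      ‖⟪x, y⟫_𝕜‖ ^ 2 := by
  rw [vecMulVec_mul_vecMulVec, trace_vecMulVec, dotProduct_smul, smul_eq_mul, dotProduct_comm,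
    ← EuclideanSpace.inner_eq_star_dotProduct, ← EuclideanSpace.inner_eq_star_dotProduct,
    ← inner_conj_symm y x, RCLike.mul_conj]

theorem sandwichRep_eq_traceRep_of_sum_norm_inner_pow_four [DecidableEq n]
    (w : ι → EuclideanSpace 𝕜 n) (hw : ∀ p, ‖w p‖ = 1)
    (hcard : Fintype.card ι = Fintype.card n * (Fintype.card n + 1))
    (hpot : ∑ p, ∑ q, ‖⟪w p, w q⟫_𝕜‖ ^ 4 = 2 * Fintype.card n * (Fintype.card n + 1)) :
    sandwichRep (fun p => vecMulVec (w p).ofLp (star (w p).ofLp)) = traceRep n 𝕜 := by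
  refine sandwichRep_eq_traceRep_of_sum_trace_sq (fun p => isHermitian_vecMulVec_star _) ?_
  have hpot' : ∑ p, ∑ q, ((‖⟪w p, w q⟫_𝕜‖ : 𝕜) ^ 2) ^ 2 =
      2 * Fintype.card n * (Fintype.card n + 1) := by
    have := congrArg (fun r : ℝ => (r : 𝕜)) hpot
    push_cast at this
    simpa only [← pow_mul] using this
  have hnorm : ∀ p, ‖⟪w p, w p⟫_𝕜‖ = 1 := fun p => by
    rw [inner_self_eq_norm_sq_to_K, hw, RCLike.ofReal_one, one_pow, norm_one]
  simp only [trace_vecMulVec_star, trace_vecMulVec_star_mul_vecMulVec_star, hpot', hnorm, hw,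
    sum_const, card_univ, hcard]
  push_cast
  ring

theorem smul_mul_mul_conjTranspose_smul {m : Type*} (c : 𝕜) (A : Matrix m n 𝕜)
    (X : Matrix n n 𝕜) : (c • A) * X * (c • A)ᴴ = (‖c‖ ^ 2 : 𝕜) • (A * X * Aᴴ) := by
  rw [conjTranspose_smul, Matrix.smul_mul, Matrix.smul_mul, Matrix.mul_smul, smul_smul,
    RCLike.star_def, RCLike.mul_conj]

theorem exists_rank_one_kraus {m : Type*} [Fintype m] (e : m ≃ ι) (w : ι → n → 𝕜)
    (hw : ∀ p, w p ≠ 0) (t : ℝ) (ht : 0 < t) :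
    ∃ A : m → Matrix n n 𝕜, (∀ k, (A k).rank = 1) ∧ ∀ X : Matrix n n 𝕜,
      ∑ k, A k * X * (A k)ᴴ =
        (t : 𝕜) • ∑ p, vecMulVec (w p) (star (w p)) * X * vecMulVec (w p) (star (w p)) := by
  set c : 𝕜 := (Real.sqrt t : 𝕜)
  have hc : c ≠ 0 := RCLike.ofReal_ne_zero.mpr (Real.sqrt_ne_zero'.mpr ht)
  have hc2 : (‖c‖ ^ 2 : 𝕜) = t := by
    rw [RCLike.norm_ofReal, abs_of_nonneg (Real.sqrt_nonneg t), ← RCLike.ofReal_pow,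
      Real.sq_sqrt ht.le]
  refine ⟨fun k => vecMulVec (c • w (e k)) (star (w (e k))),
    fun k => rank_vecMulVec_eq_one (smul_ne_zero hc (hw _)) (star_ne_zero.mpr (hw _)), fun X => ?_⟩
  simp only [smul_vecMulVec, smul_mul_mul_conjTranspose_smul, conjTranspose_vecMulVec, star_star,
    hc2, ← smul_sum]
  exact congrArg _ (e.sum_comp fun p =>
    vecMulVec (w p) (star (w p)) * X * vecMulVec (w p) (star (w p)))

end Projection

section MutuallyUnbiased

variable {𝕜 κ n E : Type*} [RCLike 𝕜] [Fintype κ] [DecidableEq κ] [Fintype n]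
  [NormedAddCommGroup E] [InnerProductSpace 𝕜 E] {v : κ → n → E}

theorem sum_norm_inner_pow_four_of_mutuallyUnbiased (horth : ∀ i, Orthonormal 𝕜 (v i))
    (hmub : ∀ i k, i ≠ k → ∀ j l, ‖⟪v i j, v k l⟫_𝕜‖ ^ 2 = 1 / Fintype.card n) (i : κ) (j : n) :
    ∑ k, ∑ l, ‖⟪v i j, v k l⟫_𝕜‖ ^ 4 = 1 + (Fintype.card κ - 1) / Fintype.card n := by
  classical
  have hn : (Fintype.card n : ℝ) ≠ 0 := by
    have : Nonempty n := ⟨j⟩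
    exact Nat.cast_ne_zero.mpr Fintype.card_ne_zero
  have hrow : ∀ k, ∑ l, ‖⟪v i j, v k l⟫_𝕜‖ ^ 4 =
      1 / (Fintype.card n : ℝ) + if k = i then 1 - 1 / (Fintype.card n : ℝ) else 0 := by
    intro k
    split_ifs with hk
    · subst hk
      simp [orthonormal_iff_ite.mp (horth k) j, apply_ite]
    · have hsq : ∀ l, ‖⟪v i j, v k l⟫_𝕜‖ ^ 4 = (1 / Fintype.card n) ^ 2 := fun l => by
        rw [show 4 = 2 * 2 from rfl, pow_mul, hmub i k (Ne.symm hk) j l]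
      simp only [hsq, sum_const, card_univ, nsmul_eq_mul, add_zero]
      field_simp
  simp only [hrow, sum_add_distrib, sum_ite_eq', mem_univ, if_true, sum_const, card_univ,
    nsmul_eq_mul]
  field_simp
  ring

theorem sum_sum_norm_inner_pow_four_of_mutuallyUnbiased (horth : ∀ i, Orthonormal 𝕜 (v i))
    (hmub : ∀ i k, i ≠ k → ∀ j l, ‖⟪v i j, v k l⟫_𝕜‖ ^ 2 = 1 / Fintype.card n)
    (hκ : Fintype.card κ = Fintype.card n + 1) :
    ∑ p : κ × n, ∑ q : κ × n, ‖⟪v p.1 p.2, v q.1 q.2⟫_𝕜‖ ^ 4 =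
      2 * Fintype.card n * (Fintype.card n + 1) := by
  have hpt : ∀ p : κ × n, ∑ q : κ × n, ‖⟪v p.1 p.2, v q.1 q.2⟫_𝕜‖ ^ 4 = 2 := fun p => by
    have : Nonempty n := ⟨p.2⟩
    have hn : (Fintype.card n : ℝ) ≠ 0 := Nat.cast_ne_zero.mpr Fintype.card_ne_zero
    rw [Fintype.sum_prod_type, sum_norm_inner_pow_four_of_mutuallyUnbiased horth hmub, hκ]
    field_simp
    push_cast
    ring
  rw [sum_congr rfl fun p _ => hpt p, sum_const, card_univ, Fintype.card_prod, hκ]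
  ring

end MutuallyUnbiased

theorem mub_channel_eq_Z_general {d : ℕ}
    (v : Fin (d + 1) → Fin d → EuclideanSpace ℂ (Fin d))
    (horth : ∀ i, Orthonormal ℂ (v i))
    (hmub : ∀ i k, i ≠ k → ∀ j l, ‖(inner ℂ (v i j) (v k l) : ℂ)‖ ^ 2 = 1 / d) :
    (∀ X : Matrix (Fin d) (Fin d) ℂ,
      ((d : ℂ) + 1)⁻¹ • ∑ i : Fin (d + 1), ∑ j : Fin d,
          outer (v i j) (v i j) * X * outer (v i j) (v i j) =
        ((d : ℂ) + 1)⁻¹ • (X + X.trace • (1 : Matrix (Fin d) (Fin d) ℂ))) ∧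
    ∃ A : Fin (d * (d + 1)) → Matrix (Fin d) (Fin d) ℂ,
      (∀ k, (A k).rank = 1) ∧
      ∀ X : Matrix (Fin d) (Fin d) ℂ,
        ((d : ℂ) + 1)⁻¹ • (X + X.trace • (1 : Matrix (Fin d) (Fin d) ℂ)) =
          ∑ k, A k * X * (A k)ᴴ := by
  set w : Fin (d + 1) × Fin d → EuclideanSpace ℂ (Fin d) := fun p => v p.1 p.2
  have hw : ∀ p, ‖w p‖ = 1 := fun p => (horth p.1).1 p.2
  have hpot := sum_sum_norm_inner_pow_four_of_mutuallyUnbiased horth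
    (by simpa only [Fintype.card_fin] using hmub) (by simp only [Fintype.card_fin])
  have hK : sandwichRep (fun p => outer (w p) (w p)) = traceRep (Fin d) ℂ :=
    sandwichRep_eq_traceRep_of_sum_norm_inner_pow_four w hw (by simp [mul_comm]) hpot
  have hZ (X : Matrix (Fin d) (Fin d) ℂ) :
      ∑ p, outer (w p) (w p) * X * outer (w p) (w p) = X + X.trace • 1 :=
    sum_mul_mul_eq_of_sandwichRep_eq hK X
  obtain ⟨A, hA, hAX⟩ := exists_rank_one_kraus (finProdFinEquiv.symm.trans (Equiv.prodComm _ _))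
    (fun p => (w p).ofLp) (fun p => (WithLp.ofLp_eq_zero 2).not.mpr ((horth p.1).ne_zero p.2))
    ((d : ℝ) + 1)⁻¹ (by positivity)
  refine ⟨fun X => by rw [← Fintype.sum_prod_type', hZ], A, hA, fun X => ?_⟩
  rw [hAX, ← hZ X]
  push_cast
  rfl

/-- If `V_1, ..., V_{d+1}` are `d+1` pairwise mutually unbiased orthonormal bases of `ℂ^d`
with projections `P_{i,j} = v_{i,j} v_{i,j}*`, then for every `X ∈ M_d(ℂ)`,
`(1/(d+1)) ∑_{i,j} P_{i,j} X P_{i,j} = (1/(d+1)) (X + tr(X) I_d)`. Consequently the map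
`Z(X) = (1/(d+1))(X + tr(X) I_d)` admits a Kraus decomposition with `d(d+1)` rank-one
operators. -/
theorem mub_channel_eq_Z {d : ℕ} (hd : 2 ≤ d)
    (v : Fin (d + 1) → Fin d → EuclideanSpace ℂ (Fin d))
    (horth : ∀ i, Orthonormal ℂ (v i))
    (hmub : ∀ i k, i ≠ k → ∀ j l, ‖(inner ℂ (v i j) (v k l) : ℂ)‖ ^ 2 = 1 / d) :
    (∀ X : Matrix (Fin d) (Fin d) ℂ,
      ((d : ℂ) + 1)⁻¹ • ∑ i : Fin (d + 1), ∑ j : Fin d,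
          outer (v i j) (v i j) * X * outer (v i j) (v i j) =
        ((d : ℂ) + 1)⁻¹ • (X + X.trace • (1 : Matrix (Fin d) (Fin d) ℂ))) ∧
    ∃ A : Fin (d * (d + 1)) → Matrix (Fin d) (Fin d) ℂ,
      (∀ k, (A k).rank = 1) ∧
      ∀ X : Matrix (Fin d) (Fin d) ℂ,
        ((d : ℂ) + 1)⁻¹ • (X + X.trace • (1 : Matrix (Fin d) (Fin d) ℂ)) =
          ∑ k, A k * X * (A k)ᴴ :=
  mub_channel_eq_Z_general v horth hmub
end
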